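/- Let f, g : ℝ → ℝ with g continuously differentiable, f twice continuously differentiable, p a real number with f(p) = 0, f'(p) ≠ 0, and p an isolated zero of f. Assume g(0) = 0 and 0 is an isolated zero of g. Define ρ(x) = (f(x + g(f(x))) − f(x)) / g(f(x)) for x ≠ p near p, ρ(p) = f'(p), and the iteration function φ(x) = x − f(x)/ρ(x). Then φ is differentiable at p, φ(p) = p, and φ'(p) = 0. -/

import Mathlib

/-!
Write `t = g (f x)`. Because `p` and `0` are isolated zeros, `t ≠ 0` for `x ≠ p` near `p`, and
`t → 0`, so `ρ x = (f (x + t) - f x) / t` is a two-point divided difference of `f` near `p`; strict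
differentiability of the `C¹` function `f` makes it converge to `f'(p)`. Since `f p = 0`, the slope
of `φ` at `p` is `1 - slope f p x / ρ x`, which tends to `1 - f'(p) / f'(p) = 0`.
-/

open Filter Topology

theorem HasStrictDerivAt.tendsto_divided_difference {𝕜 : Type*} [NontriviallyNormedField 𝕜]
    {f : 𝕜 → 𝕜} {f' a : 𝕜} (hf : HasStrictDerivAt f f' a) :
    Tendsto (fun q : 𝕜 × 𝕜 => (f (q.1 + q.2) - f q.1) / q.2) (𝓝 a ×ˢ 𝓝[≠] 0) (𝓝 f') := by
  have hshift : Tendsto (fun q : 𝕜 × 𝕜 => (q.1 + q.2, q.1)) (𝓝 a ×ˢ 𝓝[≠] 0) (𝓝 (a, a)) := by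
    have : Continuous (fun q : 𝕜 × 𝕜 => (q.1 + q.2, q.1)) := by fun_prop
    have hle : 𝓝 a ×ˢ 𝓝[≠] (0 : 𝕜) ≤ 𝓝 (a, 0) := by
      rw [nhds_prod_eq]; exact prod_mono le_rfl nhdsWithin_le_nhds
    simpa using (this.tendsto (a, 0)).mono_left hle
  have hsmall := ((hasStrictFDerivAt_iff_isLittleO ..).1 hf).comp_tendsto hshift
  simp only [Function.comp_def, add_sub_cancel_left, ContinuousLinearMap.toSpanSingleton_apply,
    smul_eq_mul] at hsmall
  have hne : ∀ᶠ q : 𝕜 × 𝕜 in 𝓝 a ×ˢ 𝓝[≠] 0, q.2 ≠ 0 :=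
    tendsto_snd.eventually self_mem_nhdsWithin
  have := hsmall.tendsto_div_nhds_zero.add_const f'
  rw [zero_add] at this
  refine this.congr' (hne.mono fun q hq => ?_)
  field_simp
  ring

theorem hasDerivAt_sub_div_of_tendsto {𝕜 : Type*} [NontriviallyNormedField 𝕜]
    {f ρ : 𝕜 → 𝕜} {f' L a : 𝕜} (hf : HasDerivAt f f' a) (hfa : f a = 0)
    (hρ : Tendsto ρ (𝓝[≠] a) (𝓝 L)) (hL : L ≠ 0) :
    HasDerivAt (fun x => x - f x / ρ x) (1 - f' / L) a := by
  rw [hasDerivAt_iff_tendsto_slope] at hf ⊢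
  refine ((hf.div hρ hL).const_sub 1).congr' (eventually_mem_nhdsWithin.mono fun x hx => ?_)
  have hxa : x - a ≠ 0 := sub_ne_zero.2 hx
  simp only [Pi.div_apply, slope_def_field, hfa, sub_zero, zero_div]
  field_simp
  ring

theorem eventually_nhdsNE_of_abs_sub_lt {P : ℝ → Prop} {a : ℝ}
    (h : ∃ ε > 0, ∀ x : ℝ, 0 < |x - a| → |x - a| < ε → P x) : ∀ᶠ x in 𝓝[≠] a, P x := by
  obtain ⟨ε, hε, hP⟩ := h
  filter_upwards [nhdsWithin_le_nhds (Metric.ball_mem_nhds a hε), self_mem_nhdsWithin]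
    with x hxε hxa
  exact hP x (abs_pos.2 (sub_ne_zero.2 hxa)) hxε

theorem ContinuousAt.tendsto_nhdsNE_of_isolated_zero {f : ℝ → ℝ} {a : ℝ} (hf : ContinuousAt f a)
    (hfa : f a = 0) (hiso : ∃ ε > 0, ∀ x : ℝ, 0 < |x - a| → |x - a| < ε → f x ≠ 0) :
    Tendsto f (𝓝[≠] a) (𝓝[≠] 0) :=
  tendsto_nhdsWithin_of_tendsto_nhds_of_eventually_within _
    (hfa ▸ hf.tendsto.mono_left nhdsWithin_le_nhds) (eventually_nhdsNE_of_abs_sub_lt hiso)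

/-- The g-Steffensen iteration function `φ(x) = x - f x / ρ x`, with
`ρ(x) = (f (x + g (f x)) - f x) / g (f x)` for `x ≠ p` and `ρ(p) = f'(p)`,
is differentiable at `p`, has `p` as a fixed point, and `φ'(p) = 0`. -/
theorem gSteffensen_phi_fixedPoint (f g : ℝ → ℝ)
    (hg : ContDiff ℝ 1 g) (hf : ContDiff ℝ 2 f)
    (p : ℝ) (hfp : f p = 0) (hfp' : deriv f p ≠ 0)
    (hfiso : ∃ ε > 0, ∀ x : ℝ, 0 < |x - p| → |x - p| < ε → f x ≠ 0)
    (hg0 : g 0 = 0)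
    (hgiso : ∃ ε > 0, ∀ y : ℝ, 0 < |y| → |y| < ε → g y ≠ 0)
    (ρ φ : ℝ → ℝ)
    (hρ : ρ = fun x : ℝ =>
      if x = p then deriv f p else (f (x + g (f x)) - f x) / g (f x))
    (hφ : φ = fun x : ℝ => x - f x / ρ x) :
    DifferentiableAt ℝ φ p ∧ φ p = p ∧ deriv φ p = 0 := by
  have hf_ne : Tendsto f (𝓝[≠] p) (𝓝[≠] 0) :=
    hf.continuous.continuousAt.tendsto_nhdsNE_of_isolated_zero hfp hfiso
  have hg_ne : Tendsto g (𝓝[≠] 0) (𝓝[≠] 0) :=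
    hg.continuous.continuousAt.tendsto_nhdsNE_of_isolated_zero hg0 (by simpa using hgiso)
  have hpair : Tendsto (fun x => (x, g (f x))) (𝓝[≠] p) (𝓝 p ×ˢ 𝓝[≠] 0) :=
    (tendsto_id.mono_left nhdsWithin_le_nhds).prodMk (hg_ne.comp hf_ne)
  have hstrict : HasStrictDerivAt f (deriv f p) p := hf.contDiffAt.hasStrictDerivAt (by norm_num)
  have hρ_lim : Tendsto ρ (𝓝[≠] p) (𝓝 (deriv f p)) := by
    refine (hstrict.tendsto_divided_difference.comp hpair).congr'
      (eventually_mem_nhdsWithin.mono fun x hx => ?_)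
    simp [hρ, Set.mem_compl_singleton_iff.1 hx]
  have hder : HasDerivAt φ 0 p := by
    have := hasDerivAt_sub_div_of_tendsto hstrict.hasDerivAt hfp hρ_lim hfp'
    rwa [div_self hfp', sub_self, ← hφ] at this
  exact ⟨hder.differentiableAt, by simp [hφ, hfp], hder.deriv⟩
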